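/- arXiv:math/0507096 — 9 statements merged into one kernel-verified Lean document; each statement's English description precedes it below -/
import Mathlib

section
/- Let k be an algebraically closed field of characteristic p > 0, and let d, e₁, e₂, e₃ be positive integers with each eᵢ prime to p, eᵢ ≤ d for all i, and 2d − 2 = (e₁−1)+(e₂−1)+(e₃−1). Suppose (g₁,h₁) and (g₂,h₂) are two pairs of coprime polynomials in k[x] each satisfying: deg gⱼ = d, deg hⱼ ≤ d − e₃, x^{e₁} divides gⱼ, (x−1)^{e₂} divides gⱼ − hⱼ, and gⱼ′hⱼ − gⱼhⱼ′ ≠ 0. Then g₁h₂ = g₂h₁, i.e., the two rational functions g₁/h₁ and g₂/h₂ are equal (the separable degree-d cover of ℙ¹ ramified to order eᵢ at 0, 1, ∞ and fixing 0, 1, ∞ is unique). -/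
/-!
Clearing denominators, `g₁/h₁ = g₂/h₂` says that `F = g₁ h₂ - g₂ h₁` vanishes. Both
quotients take the value `0` at `0` to order `e₁` and the value `1` at `1` to order `e₂`, so
`F` is divisible by `X ^ e₁ * (X - 1) ^ e₂`; the pole orders at `∞` bound its degree by
`2d - e₃`. Riemann–Hurwitz, `2d + 1 = e₁ + e₂ + e₃`, makes this smaller than `e₁ + e₂`.
-/

open Polynomial

section CommRing

variable {R : Type*} [CommRing R] {g₁ h₁ g₂ h₂ : R}

theorem dvd_mul_sub_mul_of_dvd_of_dvd {a : R} (ha₁ : a ∣ g₁) (ha₂ : a ∣ g₂) :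
    a ∣ g₁ * h₂ - g₂ * h₁ :=
  dvd_sub (ha₁.mul_right _) (ha₂.mul_right _)

theorem dvd_mul_sub_mul_of_dvd_sub_of_dvd_sub {b : R} (hb₁ : b ∣ g₁ - h₁) (hb₂ : b ∣ g₂ - h₂) :
    b ∣ g₁ * h₂ - g₂ * h₁ := by
  have hcross : g₁ * h₂ - g₂ * h₁ = (g₁ - h₁) * g₂ - g₁ * (g₂ - h₂) := by ring
  rw [hcross]
  exact dvd_sub (hb₁.mul_right _) (hb₂.mul_left _)

end CommRing

namespace Polynomial

theorem natDegree_mul_sub_mul_le {R : Type*} [CommRing R] {g₁ h₁ g₂ h₂ : R[X]} {m n : ℕ}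
    (hg₁ : g₁.natDegree ≤ m) (hh₁ : h₁.natDegree ≤ n)
    (hg₂ : g₂.natDegree ≤ m) (hh₂ : h₂.natDegree ≤ n) :
    (g₁ * h₂ - g₂ * h₁).natDegree ≤ m + n :=
  (natDegree_sub_le_of_le (natDegree_mul_le_of_le hg₁ hh₂)
    (natDegree_mul_le_of_le hg₂ hh₁)).trans (max_self _).le

theorem eq_zero_of_X_sub_C_pow_dvd_of_X_sub_C_pow_dvd {K : Type*} [Field K] {a b : K} {m n : ℕ}
    {f : K[X]} (hab : a ≠ b) (ha : (X - C a) ^ m ∣ f) (hb : (X - C b) ^ n ∣ f)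
    (hf : f.natDegree < m + n) : f = 0 := by
  have hcop : IsCoprime ((X - C a) ^ m) ((X - C b) ^ n) :=
    (isCoprime_X_sub_C_of_isUnit_sub (sub_ne_zero.mpr hab).isUnit).pow
  have hprod : ((X - C a) ^ m * (X - C b) ^ n).natDegree = m + n := by
    rw [((monic_X_sub_C a).pow m).natDegree_mul ((monic_X_sub_C b).pow n),
      natDegree_pow, natDegree_pow, natDegree_X_sub_C, natDegree_X_sub_C, mul_one, mul_one]
  exact eq_zero_of_dvd_of_natDegree_lt (hcop.mul_dvd ha hb) (hprod ▸ hf)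

end Polynomial

theorem three_point_uniqueness_general {k : Type*} [Field k]
    (d e₁ e₂ e₃ : ℕ)
    (hd₃ : e₃ ≤ d)
    (hsum : 2 * d + 1 = e₁ + e₂ + e₃)
    (g₁ h₁ g₂ h₂ : k[X])
    (hdeg₁ : g₁.natDegree = d) (hdegh₁ : h₁.natDegree ≤ d - e₃)
    (hx₁ : X ^ e₁ ∣ g₁) (hx1₁ : (X - 1) ^ e₂ ∣ (g₁ - h₁))
    (hdeg₂ : g₂.natDegree = d) (hdegh₂ : h₂.natDegree ≤ d - e₃)
    (hx₂ : X ^ e₁ ∣ g₂) (hx1₂ : (X - 1) ^ e₂ ∣ (g₂ - h₂)) :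
    g₁ * h₂ = g₂ * h₁ := by
  have hzero : (X - C 0) ^ e₁ ∣ g₁ * h₂ - g₂ * h₁ := by
    simpa using dvd_mul_sub_mul_of_dvd_of_dvd hx₁ hx₂
  have hone : (X - C 1) ^ e₂ ∣ g₁ * h₂ - g₂ * h₁ := by
    simpa using dvd_mul_sub_mul_of_dvd_sub_of_dvd_sub hx1₁ hx1₂
  have hdeg : (g₁ * h₂ - g₂ * h₁).natDegree ≤ d + (d - e₃) :=
    natDegree_mul_sub_mul_le hdeg₁.le hdegh₁ hdeg₂.le hdegh₂
  exact sub_eq_zero.mp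
    (eq_zero_of_X_sub_C_pow_dvd_of_X_sub_C_pow_dvd zero_ne_one hzero hone (by omega))

/-- Uniqueness of the separable degree-`d` cover of `ℙ¹` fixing `0, 1, ∞` and ramified to
order `e₁, e₂, e₃` at `0, 1, ∞` respectively: any two such rational functions `g₁/h₁` and
`g₂/h₂` are equal. -/
theorem three_point_uniqueness {k : Type*} [Field k] [IsAlgClosed k]
    (p : ℕ) (hp : p.Prime) [CharP k p]
    (d e₁ e₂ e₃ : ℕ)
    (hd : 0 < d) (he₁ : 0 < e₁) (he₂ : 0 < e₂) (he₃ : 0 < e₃)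
    (hp₁ : ¬ p ∣ e₁) (hp₂ : ¬ p ∣ e₂) (hp₃ : ¬ p ∣ e₃)
    (hd₁ : e₁ ≤ d) (hd₂ : e₂ ≤ d) (hd₃ : e₃ ≤ d)
    (hsum : 2 * d + 1 = e₁ + e₂ + e₃)
    (g₁ h₁ g₂ h₂ : k[X])
    (hcop₁ : IsCoprime g₁ h₁) (hdeg₁ : g₁.natDegree = d) (hdegh₁ : h₁.natDegree ≤ d - e₃)
    (hx₁ : X ^ e₁ ∣ g₁) (hx1₁ : (X - 1) ^ e₂ ∣ (g₁ - h₁))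
    (hsep₁ : derivative g₁ * h₁ - g₁ * derivative h₁ ≠ 0)
    (hcop₂ : IsCoprime g₂ h₂) (hdeg₂ : g₂.natDegree = d) (hdegh₂ : h₂.natDegree ≤ d - e₃)
    (hx₂ : X ^ e₁ ∣ g₂) (hx1₂ : (X - 1) ^ e₂ ∣ (g₂ - h₂))
    (hsep₂ : derivative g₂ * h₂ - g₂ * derivative h₂ ≠ 0) :
    g₁ * h₂ = g₂ * h₁ :=
  three_point_uniqueness_general d e₁ e₂ e₃ hd₃ hsum g₁ h₁ g₂ h₂ hdeg₁ hdegh₁ hx₁ hx1₁ hdeg₂ hdegh₂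
    hx₂ hx1₂
end

section
/- Let p be a prime and let e₁, e₂, e₃ be positive integers, each prime to p, satisfying the triangle inequality and with e₁+e₂+e₃ odd, and let d be the integer with 2d−2 = (e₁−1)+(e₂−1)+(e₃−1). If e₁ < p and e₂ < p, then (e₁,e₂,e₃) is numerically p-admissible if and only if d < p. -/
/-- `eDown q e` is `e^{[m,d]} = e − q⌊e/q⌋` where `q = p^m`. -/
def eDown (q e : ℕ) : ℕ := e - q * (e / q)

/-- `eUp q e` is `e^{[m,u]} = q⌈e/q⌉ − e` where `q = p^m`. -/
def eUp (q e : ℕ) : ℕ := q * ((e + q - 1) / q) - e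

/-- Numerical `p`-admissibility for a triple (with `2d − 2 = Σᵢ (eᵢ − 1)`). -/
def NumericallyPAdmissible3 (p d : ℕ) (e : Fin 3 → ℕ) : Prop :=
  ∀ m : ℕ, 1 ≤ m → ∀ S : Finset (Fin 3),
    p ^ m ≤ d →
    (∀ i ∈ S, p ^ m < e i) →
    Odd ((∑ i ∈ S, e i / p ^ m) + ∑ i ∈ Sᶜ, (e i + p ^ m - 1) / p ^ m) →
    p ^ m ≤ (∑ i ∈ S, eDown (p ^ m) (e i)) + ∑ i ∈ Sᶜ, eUp (p ^ m) (e i)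

/-!
For `d < p` the condition is vacuous, since no `p ^ m` with `m ≥ 1` is at most `d`. For `p ≤ d`
it already fails at `m = 1`: as `p ∤ e₃`, either all three `eᵢ` are below `p`, and `S = ∅` gives
`Σ (p - eᵢ) = 3p - (2d + 1) < p`; or `p < e₃ < e₁ + e₂ < 2p` (strictly, by parity), and
`S = {3}` gives `(e₃ - p) + (p - e₁) + (p - e₂) < p`.
-/

section RoundingDefects

variable {q e : ℕ}

lemma ceil_div_eq_one (he : 0 < e) (heq : e ≤ q) : (e + q - 1) / q = 1 :=
  Nat.div_eq_of_lt_le (by omega) (by omega)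

lemma eUp_eq_sub (he : 0 < e) (heq : e ≤ q) : eUp q e = q - e := by
  rw [eUp, ceil_div_eq_one he heq, mul_one]

lemma div_eq_one_of_le_of_lt_two_mul (hqe : q ≤ e) (he : e < 2 * q) : e / q = 1 :=
  Nat.div_eq_of_lt_le (by omega) (by omega)

lemma eDown_eq_sub (hqe : q ≤ e) (he : e < 2 * q) : eDown q e = e - q := by
  rw [eDown, div_eq_one_of_le_of_lt_two_mul hqe he, mul_one]

end RoundingDefects

section NumericallyPAdmissible3

variable {p d : ℕ} {e : Fin 3 → ℕ}

theorem numericallyPAdmissible3_of_lt (hdp : d < p) : NumericallyPAdmissible3 p d e :=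
  fun m hm _ hpm => absurd (hdp.trans_le (Nat.le_self_pow (by omega) p)) hpm.not_gt

theorem not_numericallyPAdmissible3_of_forall_lt (hpd : p ≤ d)
    (hsum : 2 * d + 1 = e 0 + e 1 + e 2) (hpos : ∀ i, 0 < e i) (hlt : ∀ i, e i < p) :
    ¬ NumericallyPAdmissible3 p d e := by
  intro hadm
  have hceil (i : Fin 3) : (e i + p - 1) / p = 1 := ceil_div_eq_one (hpos i) (hlt i).le
  have hup (i : Fin 3) : eUp p (e i) = p - e i := eUp_eq_sub (hpos i) (hlt i).le
  have := hadm 1 le_rfl ∅ (by rwa [pow_one]) (by simp)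
  simp only [pow_one, Finset.sum_empty, Finset.compl_empty, zero_add, Fin.sum_univ_three,
    hceil, hup] at this
  have := this (by decide)
  have := hlt 0; have := hlt 1; have := hlt 2
  omega

theorem not_numericallyPAdmissible3_of_lt_of_lt (hpd : p ≤ d)
    (he₀ : 0 < e 0) (he₀p : e 0 < p) (he₁ : 0 < e 1) (he₁p : e 1 < p)
    (hpe₂ : p < e 2) (he₂ : e 2 < e 0 + e 1) :
    ¬ NumericallyPAdmissible3 p d e := by
  intro hadm
  have hfloor : e 2 / p = 1 := div_eq_one_of_le_of_lt_two_mul hpe₂.le (by omega)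
  have hcompl : ({2} : Finset (Fin 3))ᶜ = {0, 1} := by decide
  have := hadm 1 le_rfl {2} (by rwa [pow_one]) (by simpa using hpe₂)
  simp only [pow_one, hcompl, Finset.sum_singleton,
    Finset.sum_pair (show (0 : Fin 3) ≠ 1 by decide), hfloor, ceil_div_eq_one he₀ he₀p.le,
    ceil_div_eq_one he₁ he₁p.le, eDown_eq_sub hpe₂.le (show e 2 < 2 * p by omega),
    eUp_eq_sub he₀ he₀p.le, eUp_eq_sub he₁ he₁p.le] at this
  have := this (by decide)
  omega

end NumericallyPAdmissible3

theorem numAdmiss3_iff_d_lt_p_of_two_small_general (p : ℕ) (d : ℕ)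
    (e : Fin 3 → ℕ)
    (hep : ∀ i, ¬ p ∣ e i)
    (htri : e 0 ≤ e 1 + e 2 ∧ e 1 ≤ e 0 + e 2 ∧ e 2 ≤ e 0 + e 1)
    (hsum : 2 * d + 1 = e 0 + e 1 + e 2)
    (h1 : e 0 < p) (h2 : e 1 < p) :
    NumericallyPAdmissible3 p d e ↔ d < p := by
  refine ⟨fun hadm => ?_, numericallyPAdmissible3_of_lt⟩
  by_contra! hpd
  have hpos (i : Fin 3) : 0 < e i := Nat.pos_of_ne_zero fun h => hep i (h ▸ dvd_zero p)
  have hne : e 2 ≠ p := fun h => hep 2 (h ▸ dvd_refl p)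
  rcases hne.lt_or_gt with h3 | h3
  · refine not_numericallyPAdmissible3_of_forall_lt hpd hsum hpos (fun i => ?_) hadm
    match i with
    | 0 => exact h1
    | 1 => exact h2
    | 2 => exact h3
  · have he₂ : e 2 < e 0 + e 1 := by omega
    exact not_numericallyPAdmissible3_of_lt_of_lt hpd (hpos 0) h1 (hpos 1) h2 h3 he₂ hadm

/-- Corollary: if `e₁, e₂ < p`, then `(e₁, e₂, e₃)` is numerically `p`-admissible if and
only if `d < p`. -/
theorem numAdmiss3_iff_d_lt_p_of_two_small (p : ℕ) (hp : p.Prime) (d : ℕ)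
    (e : Fin 3 → ℕ)
    (he : ∀ i, 0 < e i) (hep : ∀ i, ¬ p ∣ e i)
    (htri : e 0 ≤ e 1 + e 2 ∧ e 1 ≤ e 0 + e 2 ∧ e 2 ≤ e 0 + e 1)
    (hodd : Odd (e 0 + e 1 + e 2))
    (hsum : 2 * d + 1 = e 0 + e 1 + e 2)
    (h1 : e 0 < p) (h2 : e 1 < p) :
    NumericallyPAdmissible3 p d e ↔ d < p :=
  numAdmiss3_iff_d_lt_p_of_two_small_general p d e hep htri hsum h1 h2
end

section
/- Let p be a prime, r ≥ 3, and e₁, …, e_r positive integers with eᵢ < p for all i and Σᵢ(eᵢ−1) = 2d−2 for an integer d. Suppose e′₂, …, e′_{r−2} are positive integers prime to p such that, with the conventions e′₁ = e₁ and e′_{r−1} = e_r, for every m with 1 ≤ m < r−1 the triple (e′_m, e_{m+1}, e′_{m+1}) satisfies the triangle inequality and e′_m + e_{m+1} + e′_{m+1} is odd and less than 2p. Then there exists a Hurwitz factorization (σ₁,…,σ_r) for (d, r, {e₁,…,e_r}) such that for every m with 1 ≤ m ≤ r−1 the partial product σ₁σ₂⋯σ_m is a cycle of length e′_m. In particular,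 this Hurwitz factorization satisfies the conditions for p-admissibility without any pure braid transformation. -/
/-- The triangle inequality for a triple of naturals. -/
def Triangle (a b c : ℕ) : Prop := a ≤ b + c ∧ b ≤ a + c ∧ c ≤ a + b

/-- `σ` is a cycle of length `e`: either `e = 1` and `σ = 1`, or `e ≥ 2` and `σ` is a
cycle with support of cardinality `e`. -/
def IsCycleOfLength {d : ℕ} (σ : Equiv.Perm (Fin d)) (e : ℕ) : Prop :=
  (e = 1 ∧ σ = 1) ∨ (2 ≤ e ∧ σ.IsCycle ∧ σ.support.card = e)

/-- The partial product `σ 1 * σ 2 * ⋯ * σ m` of a 1-indexed tuple of permutations. -/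
def partialProd {d : ℕ} (σ : ℕ → Equiv.Perm (Fin d)) (m : ℕ) : Equiv.Perm (Fin d) :=
  ((List.range m).map (fun i => σ (i + 1))).prod

/-- `(σ 1, …, σ r)` is a Hurwitz factorization for `(d, r, {e 1, …, e r})`. -/
def IsHurwitz (d r : ℕ) (σ : ℕ → Equiv.Perm (Fin d)) (e : ℕ → ℕ) : Prop :=
  (∀ i, 1 ≤ i → i ≤ r → IsCycleOfLength (σ i) (e i)) ∧
  partialProd σ r = 1 ∧
  ∀ x y : Fin d, ∃ π ∈ Subgroup.closure (σ '' {i | 1 ≤ i ∧ i ≤ r}), π x = y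

namespace Lem54
open List Equiv Equiv.Perm

variable {d : ℕ}

/-- Element of `Fin d` from a natural number (mod d). -/
def ck (hd : 0 < d) (n : ℕ) : Fin d := ⟨n % d, Nat.mod_lt n hd⟩

lemma ck_val (hd : 0 < d) {n : ℕ} (h : n < d) : (ck hd n).val = n := Nat.mod_eq_of_lt h

lemma ck_self (hd : 0 < d) (x : Fin d) : ck hd x.val = x := by
  apply Fin.ext; exact ck_val hd x.isLt

lemma ck_congr (hd : 0 < d) {m n : ℕ} (h : m = n) : ck hd m = ck hd n := by rw [h]

/-- the list `[u, u+1, …, u+a-1]` in `Fin d`. -/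
def ivl (hd : 0 < d) (u a : ℕ) : List (Fin d) := (List.range a).map fun i => ck hd (u + i)

lemma length_ivl (hd : 0 < d) (u a : ℕ) : (ivl hd u a).length = a := by simp [ivl]

lemma getElem_ivl (hd : 0 < d) (u a : ℕ) {i : ℕ} (h : i < (ivl hd u a).length) :
    (ivl hd u a)[i] = ck hd (u + i) := by
  simp [ivl]

lemma mem_ivl (hd : 0 < d) {u a : ℕ} (hud : u + a ≤ d) {x : Fin d} :
    x ∈ ivl hd u a ↔ u ≤ x.val ∧ x.val < u + a := by
  constructor
  · rintro hx
    simp only [ivl, List.mem_map, List.mem_range] at hx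
    obtain ⟨i, hi, rfl⟩ := hx
    rw [ck_val hd (by omega)]
    omega
  · rintro ⟨h1, h2⟩
    simp only [ivl, List.mem_map, List.mem_range]
    exact ⟨x.val - u, by omega, by rw [ck_congr hd (by omega : u + (x.val - u) = x.val), ck_self]⟩

lemma nodup_ivl (hd : 0 < d) {u a : ℕ} (hud : u + a ≤ d) : (ivl hd u a).Nodup := by
  refine (List.nodup_range : (List.range a).Nodup).map_on ?_
  intro i hi j hj hij
  simp only [List.mem_range] at hi hj
  have := congrArg Fin.val hij
  rw [ck_val hd (by omega), ck_val hd (by omega)] at this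
  omega

def Lst (hd : 0 < d) (u a s c : ℕ) : List (Fin d) :=
  ((List.range (s + c - a + 1)).map fun i => ck hd (u + (a - 1) + i)) ++
    ((List.range s).map fun i => ck hd (u + (s - 1 - i)))

lemma length_Lst (hd : 0 < d) (u a s c : ℕ) : (Lst hd u a s c).length = (s + c - a + 1) + s := by
  simp [Lst]

lemma getElem_Lst_fst (hd : 0 < d) (u a s c : ℕ) {i : ℕ} (hi : i < s + c - a + 1)
    (h : i < (Lst hd u a s c).length) :
    (Lst hd u a s c)[i] = ck hd (u + (a - 1) + i) := by
  simp only [Lst]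
  rw [List.getElem_append_left (by simpa using hi)]
  simp

lemma getElem_Lst_snd (hd : 0 < d) (u a s c : ℕ) {i : ℕ} (hi : i < s)
    (h : (s + c - a + 1) + i < (Lst hd u a s c).length) :
    (Lst hd u a s c)[(s + c - a + 1) + i] = ck hd (u + (s - 1 - i)) := by
  simp only [Lst]
  rw [List.getElem_append_right (by simp)]
  simp [hi]

lemma mem_Lst (hd : 0 < d) {u a s c : ℕ} (ha : 0 < a) (hsa : s < a) (hac : a ≤ s + c)
    (hud : u + s + c ≤ d) {x : Fin d} :
    x ∈ Lst hd u a s c ↔ (u ≤ x.val ∧ x.val < u + s) ∨ (u + (a-1) ≤ x.val ∧ x.val < u + s + c) := by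
  simp only [Lst, List.mem_append, List.mem_map, List.mem_range]
  constructor
  · rintro (⟨i, hi, rfl⟩ | ⟨i, hi, rfl⟩)
    · rw [ck_val hd (by omega)]; omega
    · rw [ck_val hd (by omega)]; omega
  · rintro (⟨h1, h2⟩ | ⟨h1, h2⟩)
    · refine Or.inr ⟨u + s - 1 - x.val, by omega, Fin.ext ?_⟩
      rw [ck_val hd (by omega)]; omega
    · refine Or.inl ⟨x.val - (u + (a-1)), by omega, Fin.ext ?_⟩
      rw [ck_val hd (by omega)]; omega

lemma nodup_Lst (hd : 0 < d) {u a s c : ℕ} (ha : 0 < a) (hsa : s < a) (hac : a ≤ s + c)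
    (hud : u + s + c ≤ d) : (Lst hd u a s c).Nodup := by
  apply List.Nodup.append
  · refine List.nodup_range.map_on ?_
    intro i hi j hj hij
    simp only [List.mem_range] at hi hj
    have := congrArg Fin.val hij
    rw [ck_val hd (by omega), ck_val hd (by omega)] at this
    omega
  · refine List.nodup_range.map_on ?_
    intro i hi j hj hij
    simp only [List.mem_range] at hi hj
    have := congrArg Fin.val hij
    rw [ck_val hd (by omega), ck_val hd (by omega)] at this
    omega
  · intro x hx hy
    simp only [List.mem_map, List.mem_range] at hx hy
    obtain ⟨i, hi, rfl⟩ := hx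
    obtain ⟨j, hj, hji⟩ := hy
    have := congrArg Fin.val hji
    rw [ck_val hd (by omega), ck_val hd (by omega)] at this
    omega

lemma fp_eval (l : List (Fin d)) (hnd : l.Nodup) {i j : ℕ} (hi : i < l.length)
    (hj : j < l.length) (hmod : (i + 1) % l.length = j) {x y : Fin d}
    (hx : l[i] = x) (hy : l[j] = y) : l.formPerm x = y := by
  subst hx
  rw [List.formPerm_apply_getElem l hnd i hi]
  subst hmod
  exact hy

section eval
variable (hd : 0 < d) {u a s c : ℕ}

lemma Lst_eval_down (ha : 0 < a) (hsa : s < a) (hac : a ≤ s + c) (hud : u + s + c ≤ d) {n : ℕ} (h1 : u < n) (h2 : n < u + s) :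
    (Lst hd u a s c).formPerm (ck hd n) = ck hd (n - 1) := by
  refine fp_eval _ (nodup_Lst hd ha hsa hac hud)
    (i := (s + c - a + 1) + (u + s - 1 - n)) (j := (s + c - a + 1) + (u + s - n))
    (by rw [length_Lst]; omega) (by rw [length_Lst]; omega) ?_ ?_ ?_
  · rw [length_Lst]; rw [Nat.mod_eq_of_lt (by omega)]; try omega
  · rw [getElem_Lst_snd hd u a s c (by omega)]; exact ck_congr hd (by omega)
  · rw [getElem_Lst_snd hd u a s c (by omega)]; exact ck_congr hd (by omega)

lemma Lst_eval_bottom (ha : 0 < a) (hsa : s < a) (hac : a ≤ s + c) (hud : u + s + c ≤ d) (hs : 0 < s) :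
    (Lst hd u a s c).formPerm (ck hd u) = ck hd (u + (a - 1)) := by
  refine fp_eval _ (nodup_Lst hd ha hsa hac hud)
    (i := (s + c - a + 1) + (s - 1)) (j := 0)
    (by rw [length_Lst]; omega) (by rw [length_Lst]; omega) ?_ ?_ ?_
  · rw [length_Lst]
    have : (s + c - a + 1) + (s - 1) + 1 = (s + c - a + 1) + s := by omega
    rw [this, Nat.mod_self]
  · rw [getElem_Lst_snd hd u a s c (by omega)]; exact ck_congr hd (by omega)
  · rw [getElem_Lst_fst hd u a s c (by omega)]; exact ck_congr hd (by omega)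

lemma Lst_eval_up (ha : 0 < a) (hsa : s < a) (hac : a ≤ s + c) (hud : u + s + c ≤ d) {n : ℕ} (h1 : u + (a - 1) ≤ n) (h2 : n + 1 < u + s + c) :
    (Lst hd u a s c).formPerm (ck hd n) = ck hd (n + 1) := by
  refine fp_eval _ (nodup_Lst hd ha hsa hac hud)
    (i := n - (u + (a - 1))) (j := n + 1 - (u + (a - 1)))
    (by rw [length_Lst]; omega) (by rw [length_Lst]; omega) ?_ ?_ ?_
  · rw [length_Lst]; rw [Nat.mod_eq_of_lt (by omega)]; try omega
  · rw [getElem_Lst_fst hd u a s c (by omega)]; exact ck_congr hd (by omega)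
  · rw [getElem_Lst_fst hd u a s c (by omega)]; exact ck_congr hd (by omega)

lemma Lst_eval_top0 (ha : 0 < a) (hsa : s < a) (hac : a ≤ s + c) (hud : u + s + c ≤ d) (hs : s = 0) :
    (Lst hd u a s c).formPerm (ck hd (u + s + c - 1)) = ck hd (u + (a - 1)) := by
  refine fp_eval _ (nodup_Lst hd ha hsa hac hud)
    (i := s + c - a) (j := 0)
    (by rw [length_Lst]; omega) (by rw [length_Lst]; omega) ?_ ?_ ?_
  · rw [length_Lst]
    have h9 : (s + c - a + 1) + s = s + c - a + 1 := by omega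
    rw [h9, Nat.mod_self]
  · rw [getElem_Lst_fst hd u a s c (by omega)]; exact ck_congr hd (by omega)
  · rw [getElem_Lst_fst hd u a s c (by omega)]; exact ck_congr hd (by omega)

lemma Lst_eval_top1 (ha : 0 < a) (hsa : s < a) (hac : a ≤ s + c) (hud : u + s + c ≤ d) (hs : 0 < s) :
    (Lst hd u a s c).formPerm (ck hd (u + s + c - 1)) = ck hd (u + (s - 1)) := by
  refine fp_eval _ (nodup_Lst hd ha hsa hac hud)
    (i := s + c - a) (j := (s + c - a + 1) + 0)
    (by rw [length_Lst]; omega) (by rw [length_Lst]; omega) ?_ ?_ ?_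
  · rw [length_Lst]; rw [Nat.mod_eq_of_lt (by omega)]; try omega
  · rw [getElem_Lst_fst hd u a s c (by omega)]; exact ck_congr hd (by omega)
  · rw [getElem_Lst_snd hd u a s c (by omega)]; exact ck_congr hd (by omega)

end eval
/-- The cycle `(u, u+1, …, u+a-1)`. -/
def tau (hd : 0 < d) (u a : ℕ) : Equiv.Perm (Fin d) := (ivl hd u a).formPerm

lemma tau_fix (hd : 0 < d) {u a : ℕ} (hud : u + a ≤ d) {x : Fin d}
    (hx : x.val < u ∨ u + a ≤ x.val) : tau hd u a x = x := by
  apply List.formPerm_apply_of_notMem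
  rw [mem_ivl hd hud]
  omega

lemma tau_mid (hd : 0 < d) {u a n : ℕ} (hud : u + a ≤ d) (h1 : u ≤ n) (h2 : n + 1 < u + a) :
    tau hd u a (ck hd n) = ck hd (n + 1) := by
  refine fp_eval _ (nodup_ivl hd hud) (i := n - u) (j := n - u + 1)
    (by rw [length_ivl]; omega) (by rw [length_ivl]; omega) ?_ ?_ ?_
  · rw [length_ivl]; exact Nat.mod_eq_of_lt (by omega)
  · rw [getElem_ivl]; exact ck_congr hd (by omega)
  · rw [getElem_ivl]; exact ck_congr hd (by omega)

lemma tau_last (hd : 0 < d) {u a : ℕ} (hud : u + a ≤ d) (ha : 0 < a) :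
    tau hd u a (ck hd (u + a - 1)) = ck hd u := by
  refine fp_eval _ (nodup_ivl hd hud) (i := a - 1) (j := 0)
    (by rw [length_ivl]; omega) (by rw [length_ivl]; omega) ?_ ?_ ?_
  · rw [length_ivl]
    have : a - 1 + 1 = a := by omega
    rw [this, Nat.mod_self]
  · rw [getElem_ivl]; exact ck_congr hd (by omega)
  · rw [getElem_ivl]; exact ck_congr hd (by omega)


lemma key (hd : 0 < d) {u a s c : ℕ} (ha : 0 < a) (hsa : s < a) (hac : a ≤ s + c)
    (hud : u + s + c ≤ d) :
    tau hd u a * (Lst hd u a s c).formPerm = tau hd (u + s) c := by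
  have hua : u + a ≤ d := by omega
  ext x
  obtain ⟨n, hn⟩ := x
  have hx : (⟨n, hn⟩ : Fin d) = ck hd n := Fin.ext (ck_val hd hn).symm
  rw [hx]
  simp only [Equiv.Perm.mul_apply]
  by_cases c1 : n < u ∨ u + s + c ≤ n
  · rw [List.formPerm_apply_of_notMem (fun hm => by
      rw [mem_Lst hd ha hsa hac hud, ck_val hd hn] at hm; omega)]
    rw [tau_fix hd hua (x := ck hd n) (by rw [ck_val hd hn]; omega),
      tau_fix hd hud (x := ck hd n) (by rw [ck_val hd hn]; omega)]
  push_neg at c1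
  obtain ⟨c1a, c1b⟩ := c1
  by_cases c3 : n < u + s
  · by_cases c4 : n = u
    · rw [ck_congr hd c4]
      rw [Lst_eval_bottom hd ha hsa hac hud (by omega)]
      rw [ck_congr hd (by omega : u + (a - 1) = u + a - 1), tau_last hd hua ha]
      rw [tau_fix hd hud (x := ck hd u) (by rw [ck_val hd (by omega : u < d)]; omega)]
    · rw [Lst_eval_down hd ha hsa hac hud (by omega) (by omega)]
      rw [tau_mid hd hua (n := n - 1) (by omega) (by omega)]
      rw [tau_fix hd hud (x := ck hd n) (by rw [ck_val hd hn]; omega)]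
      rw [ck_congr hd (show n - 1 + 1 = n by omega)]
  · by_cases c5 : n = u + s + c - 1
    · rw [ck_congr hd c5]
      by_cases c6 : s = 0
      · rw [Lst_eval_top0 hd ha hsa hac hud c6]
        rw [ck_congr hd (by omega : u + (a - 1) = u + a - 1), tau_last hd hua ha]
        rw [ck_congr hd (by omega : u + s + c - 1 = (u + s) + c - 1),
          tau_last hd hud (by omega)]
        rw [ck_congr hd (show u = u + s by omega)]
      · rw [Lst_eval_top1 hd ha hsa hac hud (by omega)]
        rw [tau_mid hd hua (n := u + (s - 1)) (by omega) (by omega)]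
        rw [ck_congr hd (by omega : u + s + c - 1 = (u + s) + c - 1),
          tau_last hd hud (by omega)]
        rw [ck_congr hd (show u + (s - 1) + 1 = u + s by omega)]
    · by_cases c7 : n < u + (a - 1)
      · rw [List.formPerm_apply_of_notMem (fun hm => by
          rw [mem_Lst hd ha hsa hac hud, ck_val hd hn] at hm; omega)]
        rw [tau_mid hd hua (n := n) (by omega) (by omega)]
        rw [tau_mid hd hud (n := n) (by omega) (by omega)]
      · rw [Lst_eval_up hd ha hsa hac hud (by omega) (by omega)]
        rw [tau_fix hd hua (x := ck hd (n + 1))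
          (by rw [ck_val hd (by omega : n + 1 < d)]; omega)]
        rw [tau_mid hd hud (n := n) (by omega) (by omega)]

end Lem54


lemma isCycleOfLength_formPerm {d : ℕ} (l : List (Fin d)) (hnd : l.Nodup) {e : ℕ}
    (hl : l.length = e) (he : 0 < e) : IsCycleOfLength l.formPerm e := by
  rcases Nat.lt_or_ge e 2 with h2 | h2
  · left
    have he1 : e = 1 := by omega
    have hl1 : l.length = 1 := by omega
    obtain ⟨x, rfl⟩ := List.length_eq_one_iff.mp hl1
    exact ⟨he1, List.formPerm_singleton x⟩
  · right
    refine ⟨h2, List.isCycle_formPerm hnd (by omega), ?_⟩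
    rw [List.support_formPerm_of_nodup l hnd (fun x hx => by rw [hx] at hl; simp at hl; omega),
      List.toFinset_card_of_nodup hnd, hl]

lemma isCycleOfLength_inv {d : ℕ} {σ : Equiv.Perm (Fin d)} {e : ℕ}
    (h : IsCycleOfLength σ e) : IsCycleOfLength σ⁻¹ e := by
  rcases h with ⟨h1, h2⟩ | ⟨h1, h2, h3⟩
  · exact Or.inl ⟨h1, by rw [h2]; simp⟩
  · exact Or.inr ⟨h1, h2.inv, by rw [Equiv.Perm.support_inv, h3]⟩

lemma partialProd_succ {d : ℕ} (g : ℕ → Equiv.Perm (Fin d)) (m : ℕ) :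
    partialProd g (m + 1) = partialProd g m * g (m + 1) := by
  simp [partialProd, List.range_succ]

lemma partialProd_zero {d : ℕ} (g : ℕ → Equiv.Perm (Fin d)) : partialProd g 0 = 1 := by
  simp [partialProd]


/-- Lemma 5.4: given `e'_m` verifying numerical `p`-admissibility for `(e 1, …, e r)`,
there is a Hurwitz factorization whose partial products `σ 1 ⋯ σ m` are cycles of
length `e'_m`. -/
theorem exists_hurwitz_with_cycle_partial_products (p : ℕ) (hp : p.Prime)
    (d r : ℕ) (hr : 3 ≤ r) (e : ℕ → ℕ)
    (he : ∀ i, 1 ≤ i → i ≤ r → 0 < e i)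
    (hep : ∀ i, 1 ≤ i → i ≤ r → e i < p)
    (hsum : 2 * d + r = (∑ i ∈ Finset.Icc 1 r, e i) + 2)
    (e' : ℕ → ℕ)
    (h1 : e' 1 = e 1) (h2 : e' (r - 1) = e r)
    (h3 : ∀ m, 2 ≤ m → m ≤ r - 2 → 0 < e' m ∧ ¬ p ∣ e' m)
    (h4 : ∀ m, 1 ≤ m → m < r - 1 →
      Triangle (e' m) (e (m + 1)) (e' (m + 1)) ∧
      Odd (e' m + e (m + 1) + e' (m + 1)) ∧
      e' m + e (m + 1) + e' (m + 1) < 2 * p) :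
    ∃ σ : ℕ → Equiv.Perm (Fin d), IsHurwitz d r σ e ∧
      ∀ m, 1 ≤ m → m ≤ r - 1 → IsCycleOfLength (partialProd σ m) (e' m) := by
  classical
  -- positivity of d
  have hsum_ge : r ≤ ∑ i ∈ Finset.Icc 1 r, e i := by
    calc r = ∑ _i ∈ Finset.Icc 1 r, 1 := by simp [Nat.card_Icc]
    _ ≤ ∑ i ∈ Finset.Icc 1 r, e i := by
        refine Finset.sum_le_sum fun i hi => ?_
        rw [Finset.mem_Icc] at hi
        exact he i hi.1 hi.2
  have hd : 0 < d := by omega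
  -- positivity of the e'
  have he'pos : ∀ m, 1 ≤ m → m ≤ r - 1 → 0 < e' m := by
    intro m hm1 hm2
    by_cases hc1 : m = 1
    · subst hc1; rw [h1]; exact he 1 (by omega) (by omega)
    by_cases hc2 : m = r - 1
    · subst hc2; rw [h2]; exact he r (by omega) le_rfl
    · exact (h3 m (by omega) (by omega)).1
  -- the overlap function s
  obtain ⟨s, hs⟩ : ∃ s : ℕ → ℕ, ∀ m, 1 ≤ m → m < r - 1 →
      2 * s m + e' (m + 1) + 1 = e' m + e (m + 1) ∧ s m < e' m ∧ e' m ≤ s m + e' (m + 1) := by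
    refine ⟨fun m => (e' m + e (m + 1) - (e' (m + 1) + 1)) / 2, fun m hm1 hm2 => ?_⟩
    obtain ⟨⟨t1, t2, t3⟩, ⟨t, ht⟩, -⟩ := h4 m hm1 hm2
    have hb : 0 < e (m + 1) := he (m + 1) (by omega) (by omega)
    have hc : 0 < e' (m + 1) := by
      by_cases hc2 : m + 1 = r - 1
      · rw [hc2, h2]; exact he r (by omega) le_rfl
      · exact (h3 (m + 1) (by omega) (by omega)).1
    dsimp [Triangle] at *
    omega
  -- the left endpoints u
  obtain ⟨u, hu1, husucc⟩ : ∃ u : ℕ → ℕ, u 1 = 0 ∧ ∀ m, 1 ≤ m → u (m + 1) = u m + s m :=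
    ⟨fun m => ∑ i ∈ Finset.Ico 1 m, s i, by simp,
      fun m hm => Finset.sum_Ico_succ_top hm _⟩
  -- telescoping identity
  have hT : ∀ m, 1 ≤ m → m ≤ r - 1 → 2 * u m + e' m + m = (∑ i ∈ Finset.Icc 1 m, e i) + 1 := by
    intro m
    induction m with
    | zero => omega
    | succ k ih =>
      intro _ hk2
      by_cases hk : k = 0
      · subst hk
        rw [hu1, Finset.Icc_self, Finset.sum_singleton, h1]
        omega
      · have hk1 : 1 ≤ k := by omega
        have := ih hk1 (by omega)
        have hu' := husucc k hk1
        have hsk := (hs k hk1 (by omega)).1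
        rw [Finset.sum_Icc_succ_top (by omega : 1 ≤ k + 1)]
        omega
  -- the rightmost endpoint is d
  have hfin : u (r - 1) + e' (r - 1) = d := by
    have hT' := hT (r - 1) (by omega) le_rfl
    have hsplit : ∑ i ∈ Finset.Icc 1 r, e i = (∑ i ∈ Finset.Icc 1 (r - 1), e i) + e r := by
      have hr' : r - 1 + 1 = r := by omega
      rw [← hr', Finset.sum_Icc_succ_top (by omega : 1 ≤ r - 1 + 1), hr']
    omega
  -- all the intervals fit in d
  have hub : ∀ m, 1 ≤ m → m ≤ r - 1 → u m + e' m ≤ d := by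
    have step : ∀ j, 1 ≤ j → j < r - 1 → u j + e' j ≤ u (j + 1) + e' (j + 1) := by
      intro j hj1 hj2
      have := (hs j hj1 hj2).2.2
      rw [husucc j hj1]
      omega
    have key : ∀ k m, 1 ≤ m → m + k = r - 1 → u m + e' m ≤ d := by
      intro k
      induction k with
      | zero =>
        intro m hm1 hm2
        have hm : m = r - 1 := by omega
        subst hm
        exact hfin.le
      | succ k ih =>
        intro m hm1 hm2
        calc u m + e' m ≤ u (m + 1) + e' (m + 1) := step m hm1 (by omega)
        _ ≤ d := ih (m + 1) (by omega) (by omega)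
    intro m hm1 hm2
    exact key (r - 1 - m) m hm1 (by omega)
  -- the partial-product cycles and the factorization
  set T : ℕ → Equiv.Perm (Fin d) := fun m => Lem54.tau hd (u m) (e' m) with hTf
  set σf : ℕ → Equiv.Perm (Fin d) := fun i =>
    if i = 1 then T 1
    else if i ≤ r - 1 then (T (i - 1))⁻¹ * T i
    else if i = r then (T (r - 1))⁻¹
    else 1 with hσf
  have hσ1 : σf 1 = T 1 := by simp [hσf]
  have hσmid : ∀ i, 2 ≤ i → i ≤ r - 1 → σf i = (T (i - 1))⁻¹ * T i := by
    intro i hi1 hi2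
    simp only [hσf]
    rw [if_neg (by omega), if_pos hi2]
  have hσr : σf r = (T (r - 1))⁻¹ := by
    simp only [hσf]
    rw [if_neg (by omega), if_neg (by omega)]
    simp
  have hppT : ∀ m, 1 ≤ m → m ≤ r - 1 → partialProd σf m = T m := by
    intro m
    induction m with
    | zero => omega
    | succ k ih =>
      intro _ hk2
      by_cases hk : k = 0
      · subst hk
        rw [partialProd_succ, partialProd_zero, one_mul, hσ1]
      · have hk1 : 1 ≤ k := by omega
        rw [partialProd_succ, ih hk1 (by omega), hσmid (k + 1) (by omega) hk2]
        simp
  -- σf i for middle i is an explicit cycle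
  have hσform : ∀ i, 2 ≤ i → i ≤ r - 1 →
      σf i = (Lem54.Lst hd (u (i - 1)) (e' (i - 1)) (s (i - 1)) (e' i)).formPerm := by
    intro i hi1 hi2
    have hm1 : 1 ≤ i - 1 := by omega
    have hmr : i - 1 < r - 1 := by omega
    have hi1' : i - 1 + 1 = i := by omega
    obtain ⟨k1, k2, k3⟩ := hs (i - 1) hm1 hmr
    rw [hi1'] at k1 k3
    have husub : u i = u (i - 1) + s (i - 1) := by
      have := husucc (i - 1) hm1; rwa [hi1'] at this
    have hk := Lem54.key hd (u := u (i - 1)) (a := e' (i - 1)) (s := s (i - 1)) (c := e' i)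
      (he'pos (i - 1) hm1 (by omega)) k2 k3
      (by have := hub i (by omega) hi2; omega)
    rw [hσmid i hi1 hi2, inv_mul_eq_iff_eq_mul]
    refine Eq.symm ?_
    calc T (i - 1) * (Lem54.Lst hd (u (i - 1)) (e' (i - 1)) (s (i - 1)) (e' i)).formPerm
        = Lem54.tau hd (u (i - 1) + s (i - 1)) (e' i) := hk
    _ = T i := by simp only [hTf]; rw [husub]
  -- cycle lengths of the partial products
  have hTcyc : ∀ m, 1 ≤ m → m ≤ r - 1 → IsCycleOfLength (T m) (e' m) := by
    intro m hm1 hm2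
    exact isCycleOfLength_formPerm _ (Lem54.nodup_ivl hd (hub m hm1 hm2))
      (Lem54.length_ivl hd (u m) (e' m)) (he'pos m hm1 hm2)
  -- cycle lengths of the σf
  have hσcyc : ∀ i, 1 ≤ i → i ≤ r → IsCycleOfLength (σf i) (e i) := by
    intro i hi1 hi2
    by_cases hc1 : i = 1
    · subst hc1
      rw [hσ1, ← h1]
      exact hTcyc 1 le_rfl (by omega)
    by_cases hc2 : i ≤ r - 1
    · have hi2' : 2 ≤ i := by omega
      rw [hσform i hi2' hc2]
      have hm1 : 1 ≤ i - 1 := by omega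
      have hi1' : i - 1 + 1 = i := by omega
      obtain ⟨k1, k2, k3⟩ := hs (i - 1) hm1 (by omega)
      rw [hi1'] at k1 k3
      refine isCycleOfLength_formPerm _
        (Lem54.nodup_Lst hd (he'pos (i - 1) hm1 (by omega)) k2 k3
          (by have := hub i (by omega) hc2
              have husub : u i = u (i - 1) + s (i - 1) := by
                have := husucc (i - 1) hm1; rwa [hi1'] at this
              omega))
        ?_ (he i hi1 hi2)
      rw [Lem54.length_Lst]
      omega
    · have hir : i = r := by omega
      rw [hir, hσr, ← h2]
      exact isCycleOfLength_inv (hTcyc (r - 1) (by omega) le_rfl)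
  -- the total product is 1
  have hprod : partialProd σf r = 1 := by
    have hr' : r - 1 + 1 = r := by omega
    have : partialProd σf r = partialProd σf (r - 1) * σf r := by
      conv_lhs => rw [← hr']
      rw [partialProd_succ, hr']
    rw [this, hppT (r - 1) (by omega) le_rfl, hσr]
    simp
  -- transitivity
  set Hgp := Subgroup.closure (σf '' {i | 1 ≤ i ∧ i ≤ r}) with hHgp
  have hσH : ∀ i, 1 ≤ i → i ≤ r → σf i ∈ Hgp :=
    fun i hi1 hi2 => Subgroup.subset_closure ⟨i, ⟨hi1, hi2⟩, rfl⟩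
  have hppH : ∀ m, m ≤ r → partialProd σf m ∈ Hgp := by
    intro m
    induction m with
    | zero => intro _; rw [partialProd_zero]; exact Subgroup.one_mem _
    | succ k ih =>
      intro hk
      rw [partialProd_succ]
      exact Subgroup.mul_mem _ (ih (by omega)) (hσH (k + 1) (by omega) hk)
  have hTH : ∀ m, 1 ≤ m → m ≤ r - 1 → T m ∈ Hgp :=
    fun m hm1 hm2 => hppT m hm1 hm2 ▸ hppH m (by omega)
  -- moving within one cycle
  have hmove : ∀ m, 1 ≤ m → m ≤ r - 1 → 2 ≤ e' m → ∀ x y : Fin d,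
      u m ≤ x.val → x.val < u m + e' m → u m ≤ y.val → y.val < u m + e' m →
      ∃ ρ ∈ Hgp, ρ x = y := by
    intro m hm1 hm2 hm3 x y hx1 hx2 hy1 hy2
    have hud := hub m hm1 hm2
    have hnd := Lem54.nodup_ivl hd hud
    have hlen := Lem54.length_ivl hd (u m) (e' m)
    have hcyc : (T m).IsCycle := List.isCycle_formPerm hnd (by omega)
    have hsupp : (T m).support = (Lem54.ivl hd (u m) (e' m)).toFinset :=
      List.support_formPerm_of_nodup _ hnd
        (fun z hz => by rw [hz] at hlen; simp at hlen; omega)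
    have hxs : T m x ≠ x := by
      have : x ∈ (T m).support := by
        rw [hsupp, List.mem_toFinset, Lem54.mem_ivl hd hud]
        exact ⟨hx1, hx2⟩
      exact Equiv.Perm.mem_support.mp this
    have hys : T m y ≠ y := by
      have : y ∈ (T m).support := by
        rw [hsupp, List.mem_toFinset, Lem54.mem_ivl hd hud]
        exact ⟨hy1, hy2⟩
      exact Equiv.Perm.mem_support.mp this
    obtain ⟨kk, hkk⟩ := hcyc.exists_zpow_eq hxs hys
    exact ⟨T m ^ kk, Subgroup.zpow_mem _ (hTH m hm1 hm2) kk, hkk⟩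
  -- every point can be moved to 0
  have hreach : ∀ m, 1 ≤ m → m ≤ r - 1 → ∀ x : Fin d, x.val < u m + e' m →
      ∃ π ∈ Hgp, π x = (⟨0, hd⟩ : Fin d) := by
    intro m
    induction m with
    | zero => omega
    | succ k ih =>
      intro _ hk2 x hx
      by_cases hk : k = 0
      · subst hk
        simp only [Nat.zero_add] at hx
        rw [hu1] at hx
        by_cases h1' : e' 1 = 1
        · refine ⟨1, Subgroup.one_mem _, ?_⟩
          apply Fin.ext
          simp only [Equiv.Perm.one_apply]
          show x.val = 0
          omega
        · have h2' : 2 ≤ e' 1 := by have := he'pos 1 (by omega) (by omega); omega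
          refine hmove 1 le_rfl (by omega) h2' x ⟨0, hd⟩ ?_ ?_ ?_ ?_
          · rw [hu1]; exact Nat.zero_le _
          · rw [hu1]; omega
          · rw [hu1]; try exact Nat.zero_le _
          · show (0 : ℕ) < u 1 + e' 1
            have := he'pos 1 (by omega) (by omega)
            omega
      · have hk1 : 1 ≤ k := by omega
        by_cases hx' : x.val < u k + e' k
        · exact ih hk1 (by omega) x hx'
        · push_neg at hx'
          have hu' := husucc k hk1
          obtain ⟨k1, k2, k3⟩ := hs k hk1 (by omega)
          have hx1 : u (k + 1) ≤ x.val := by omega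
          have hc2 : 2 ≤ e' (k + 1) := by omega
          have hyval : u (k + 1) < d := by
            have := hub (k + 1) (by omega) hk2
            omega
          obtain ⟨ρ, hρ, hρx⟩ := hmove (k + 1) (by omega) hk2 hc2 x ⟨u (k + 1), hyval⟩
            hx1 hx (by simp) (by simp; omega)
          obtain ⟨π, hπ, hπy⟩ := ih hk1 (by omega) ⟨u (k + 1), hyval⟩ (by simp; omega)
          refine ⟨π * ρ, Subgroup.mul_mem _ hπ hρ, ?_⟩
          rw [Equiv.Perm.mul_apply, hρx, hπy]
  -- assemble
  refine ⟨σf, ⟨hσcyc, hprod, ?_⟩, ?_⟩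
  · intro x y
    have hx := hreach (r - 1) (by omega) le_rfl x (by rw [hfin]; exact x.isLt)
    have hy := hreach (r - 1) (by omega) le_rfl y (by rw [hfin]; exact y.isLt)
    obtain ⟨πx, hπx, hπxx⟩ := hx
    obtain ⟨πy, hπy, hπyy⟩ := hy
    refine ⟨πy⁻¹ * πx, Subgroup.mul_mem _ (Subgroup.inv_mem _ hπy) hπx, ?_⟩
    rw [Equiv.Perm.mul_apply, hπxx, ← hπyy]
    simp
  · intro m hm1 hm2
    rw [hppT m hm1 hm2]
    exact hTcyc m hm1 hm2
end

section
/- Let p be a prime and let e₁, e₂, e₃, e₄ be positive integers with eᵢ < p for all i, Σᵢ(eᵢ−1) = 2d−2 for an integer d, and eᵢ ≤ d for all i. Then the tuple (e₁,e₂,e₃,e₄) is numerically p-admissible if and only if eᵢ > d + 1 − p for all i. -/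
/-- A tuple `(e 1, …, e r)` of positive integers each `< p` is numerically `p`-admissible
if there are positive integers `e' 2, …, e' (r-2)` prime to `p` such that, with the
conventions `e' 1 = e 1` and `e' (r-1) = e r`, each consecutive triple
`(e' m, e (m+1), e' (m+1))` satisfies the triangle inequality and has odd sum less
than `2p`. -/
def NumericallyPAdmissible (p r : ℕ) (e : ℕ → ℕ) : Prop :=
  ∃ e' : ℕ → ℕ,
    e' 1 = e 1 ∧ e' (r - 1) = e r ∧
    (∀ m, 2 ≤ m → m ≤ r - 2 → 0 < e' m ∧ ¬ p ∣ e' m) ∧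
    (∀ m, 1 ≤ m → m < r - 1 →
      Triangle (e' m) (e (m + 1)) (e' (m + 1)) ∧
      Odd (e' m + e (m + 1) + e' (m + 1)) ∧
      e' m + e (m + 1) + e' (m + 1) < 2 * p)

/-!
For four points the admissibility condition asks for a single middle value `c` such that both
`(e₁, e₂, c)` and `(c, e₃, e₄)` are triangles with odd perimeter below `2p`. The smallest
candidate `c = max (|e₁ - e₂|, |e₃ - e₄|) + 1` has the right parity, lies strictly between `0`
and `p`, and works as soon as any `c` does. Its perimeter bounds read `e₁ + e₂ + |e₃ - e₄| < 2p`
and `e₃ + e₄ + |e₁ - e₂| < 2p`, which, using `Σ eᵢ = 2d + 2`, say exactly `eᵢ > d + 1 - p`.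
-/

def AdmissibleTriple (p a b c : ℕ) : Prop :=
  Triangle a b c ∧ Odd (a + b + c) ∧ a + b + c < 2 * p

theorem numericallyPAdmissible_four_iff {p : ℕ} {e : ℕ → ℕ} :
    NumericallyPAdmissible p 4 e ↔
      ∃ c, 0 < c ∧ ¬ p ∣ c ∧
        AdmissibleTriple p (e 1) (e 2) c ∧ AdmissibleTriple p c (e 3) (e 4) := by
  constructor
  · rintro ⟨e', h₁, h₃, hmid, htriple⟩
    obtain ⟨hpos, hndvd⟩ := hmid 2 le_rfl le_rfl
    refine ⟨e' 2, hpos, hndvd, ?_, ?_⟩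
    · simpa only [AdmissibleTriple, h₁] using htriple 1 le_rfl (by norm_num)
    · simpa only [AdmissibleTriple, ← h₃] using htriple 2 (by norm_num) (by norm_num)
  · rintro ⟨c, hpos, hndvd, h₁₂, h₃₄⟩
    refine ⟨fun m => if m = 1 then e 1 else if m = 2 then c else e 4, rfl, rfl, ?_, ?_⟩
    · intro m hm₂ hm₂'
      obtain rfl : m = 2 := by omega
      exact ⟨hpos, hndvd⟩
    · intro m hm₁ hm₃
      obtain rfl | rfl : m = 1 ∨ m = 2 := by omega
      exacts [h₁₂, h₃₄]

theorem exists_admissibleTriple_pair_iff {p a b x y : ℕ} (ha : 0 < a) (hb : 0 < b)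
    (hx : 0 < x) (hy : 0 < y) (hap : a < p) (hbp : b < p) (hxp : x < p) (hyp : y < p) :
    (∃ c, 0 < c ∧ ¬ p ∣ c ∧ AdmissibleTriple p a b c ∧ AdmissibleTriple p c x y) ↔
      Even (a + b + x + y) ∧ x.dist y < a + b ∧ a.dist b < x + y ∧
        a + b + x.dist y < 2 * p ∧ x + y + a.dist b < 2 * p := by
  simp only [AdmissibleTriple, Triangle, Nat.dist, Nat.odd_iff, Nat.even_iff]
  constructor
  · rintro ⟨c, -, -, h₁₂, h₃₄⟩
    -- parity rules out `c = a + b`, so `|x - y| ≤ c < a + b`; symmetrically for `|a - b|`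
    omega
  · rintro ⟨hpar, hxy, hab, hperim₁, hperim₂⟩
    set c := max (a - b + (b - a)) (x - y + (y - x)) + 1
    have hc : 0 < c ∧ c < p := by omega
    exact ⟨c, hc.1, Nat.not_dvd_of_pos_of_lt hc.1 hc.2, by omega⟩

theorem four_point_admissibility_general (p : ℕ) (d : ℕ) (e : ℕ → ℕ)
    (he : ∀ i, 1 ≤ i → i ≤ 4 → 0 < e i)
    (hep : ∀ i, 1 ≤ i → i ≤ 4 → e i < p)
    (hed : ∀ i, 1 ≤ i → i ≤ 4 → e i ≤ d)
    (hsum : 2 * d + 2 = e 1 + e 2 + e 3 + e 4) :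
    NumericallyPAdmissible p 4 e ↔
      ∀ i, 1 ≤ i → i ≤ 4 → (d : ℤ) + 1 - p < (e i : ℤ) := by
  have hbounds (i : ℕ) (hi₁ : 1 ≤ i) (hi₄ : i ≤ 4) : 0 < e i ∧ e i < p ∧ e i ≤ d :=
    ⟨he i hi₁ hi₄, hep i hi₁ hi₄, hed i hi₁ hi₄⟩
  obtain ⟨h₁, h₁p, h₁d⟩ := hbounds 1 le_rfl (by norm_num)
  obtain ⟨h₂, h₂p, h₂d⟩ := hbounds 2 (by norm_num) (by norm_num)
  obtain ⟨h₃, h₃p, h₃d⟩ := hbounds 3 (by norm_num) (by norm_num)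
  obtain ⟨h₄, h₄p, h₄d⟩ := hbounds 4 (by norm_num) le_rfl
  rw [numericallyPAdmissible_four_iff, exists_admissibleTriple_pair_iff h₁ h₂ h₃ h₄ h₁p h₂p h₃p h₄p]
  simp only [Nat.dist, Nat.even_iff]
  constructor
  · rintro ⟨-, -, -, hperim₁₂, hperim₃₄⟩ i hi₁ hi₄
    interval_cases i <;> omega
  · intro hlarge
    have := hlarge 1 le_rfl (by norm_num)
    have := hlarge 2 (by norm_num) (by norm_num)
    have := hlarge 3 (by norm_num) (by norm_num)
    have := hlarge 4 (by norm_num) le_rfl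
    omega

/-- Example 4.5 (four points): for `r = 4` and all `eᵢ < p`, the tuple `(e₁, e₂, e₃, e₄)`
is numerically `p`-admissible if and only if `eᵢ > d + 1 − p` for all `i`. -/
theorem four_point_admissibility (p : ℕ) (hp : p.Prime) (d : ℕ) (e : ℕ → ℕ)
    (he : ∀ i, 1 ≤ i → i ≤ 4 → 0 < e i)
    (hep : ∀ i, 1 ≤ i → i ≤ 4 → e i < p)
    (hed : ∀ i, 1 ≤ i → i ≤ 4 → e i ≤ d)
    (hsum : 2 * d + 2 = e 1 + e 2 + e 3 + e 4) :
    NumericallyPAdmissible p 4 e ↔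
      ∀ i, 1 ≤ i → i ≤ 4 → (d : ℤ) + 1 - p < (e i : ℤ) :=
  four_point_admissibility_general p d e he hep hed hsum
end

section
/- Let p be an odd prime and let r be a positive multiple of 3 with r ≥ 3. Define e₁, …, e_r by eᵢ = p−2 if i ≡ 2 (mod 3) and eᵢ = (p−1)/2 otherwise. Then the tuple (e₁,…,e_r) is numerically p-admissible. -/
theorem NumericallyPAdmissible.of_eq_on {p r : ℕ} {e f : ℕ → ℕ} (hr : 1 ≤ r)
    (hef : ∀ i, 1 ≤ i → i ≤ r → e i = f i) (hf : NumericallyPAdmissible p r f) :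
    NumericallyPAdmissible p r e := by
  obtain ⟨e', h_first, h_last, h_inner, h_step⟩ := hf
  refine ⟨e', ?_, ?_, h_inner, fun m hm hmr => ?_⟩
  · rw [hef 1 le_rfl hr, h_first]
  · rw [hef r hr le_rfl, h_last]
  · rw [hef (m + 1) (by omega) (by omega)]
    exact h_step m hm hmr

def exampleTuple (p i : ℕ) : ℕ := if i % 3 = 2 then p - 2 else (p - 1) / 2

def exampleWitness (k m : ℕ) : ℕ := if m % 3 = 0 then 1 else k

theorem exampleTuple_two_mul_add_one (k i : ℕ) :
    exampleTuple (2 * k + 1) i = if i % 3 = 2 then 2 * k - 1 else k := by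
  unfold exampleTuple
  split_ifs <;> omega

theorem exampleWitness_pos_not_dvd {k : ℕ} (hk : 1 ≤ k) (m : ℕ) :
    0 < exampleWitness k m ∧ ¬ 2 * k + 1 ∣ exampleWitness k m := by
  have h_pos : 0 < exampleWitness k m := by unfold exampleWitness; split_ifs <;> omega
  have h_lt : exampleWitness k m < 2 * k + 1 := by unfold exampleWitness; split_ifs <;> omega
  exact ⟨h_pos, Nat.not_dvd_of_pos_of_lt h_pos h_lt⟩

theorem exampleWitness_step {k : ℕ} (hk : 1 ≤ k) (m : ℕ) :
    Triangle (exampleWitness k m) (exampleTuple (2 * k + 1) (m + 1)) (exampleWitness k (m + 1)) ∧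
      Odd (exampleWitness k m + exampleTuple (2 * k + 1) (m + 1) + exampleWitness k (m + 1)) ∧
      exampleWitness k m + exampleTuple (2 * k + 1) (m + 1) + exampleWitness k (m + 1) <
        2 * (2 * k + 1) := by
  rw [exampleTuple_two_mul_add_one, Nat.odd_iff]
  unfold exampleWitness Triangle
  split_ifs <;> omega

theorem exampleTuple_admissible {k r : ℕ} (hk : 1 ≤ k) (hr : 1 ≤ r) (h3r : 3 ∣ r) :
    NumericallyPAdmissible (2 * k + 1) r (exampleTuple (2 * k + 1)) := by
  refine ⟨exampleWitness k, ?_, ?_, fun m _ _ => exampleWitness_pos_not_dvd hk m,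
    fun m _ _ => exampleWitness_step hk m⟩
  · simp [exampleWitness, exampleTuple_two_mul_add_one]
  · simp only [exampleWitness, exampleTuple_two_mul_add_one]
    rw [if_neg (by omega), if_neg (by omega)]

/-- Example 4.4: for `p` an odd prime and `r ≥ 3` a multiple of 3, the tuple with
`eᵢ = p − 2` for `i ≡ 2 (mod 3)` and `eᵢ = (p−1)/2` otherwise is numerically
`p`-admissible. -/
theorem example_tuple_admissible (p : ℕ) (hp : p.Prime) (hodd : Odd p)
    (r : ℕ) (hr : 3 ≤ r) (h3r : 3 ∣ r) (e : ℕ → ℕ)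
    (he : ∀ i, 1 ≤ i → i ≤ r → e i = if i % 3 = 2 then p - 2 else (p - 1) / 2) :
    NumericallyPAdmissible p r e := by
  obtain ⟨k, rfl⟩ := hodd
  have hk : 1 ≤ k := by have := hp.two_le; omega
  exact NumericallyPAdmissible.of_eq_on (f := exampleTuple (2 * k + 1)) (by omega) he
    (exampleTuple_admissible hk (by omega) h3r)
end

section
/- Let p be an odd prime and let r ≥ 3 be odd. Define eᵢ = p−1 for 1 ≤ i ≤ r−2, and let e_{r−1}, e_r be positive integers less than p with e_{r−1} + e_r > p and e_{r−1} + e_r odd. Then the tuple (e₁,…,e_r) is not numerically p-admissible. -/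
/-!
Along the chain `e'₁, e'₂, …` every middle entry is `p - 1`, and the conditions on
`(e'ₘ, p - 1, e'ₘ₊₁)` leave no choice: from `p - 1` the bound `< 2p` and the parity force
`e'ₘ₊₁ = 1`, and from `1` the triangle inequality, the bound and the parity force
`e'ₘ₊₁ = p - 1`. Since `r - 2` is odd, `e'_{r-2} = p - 1`, and then the last triple
`(p - 1, e_{r-1}, e_r)` has sum at least `2p` because `e_{r-1} + e_r > p`.
-/

/-- Conditions (i) and (ii) on a single triple `(e'ₘ, eₘ₊₁, e'ₘ₊₁)`. -/
def AdmissibleStep (p a b c : ℕ) : Prop :=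
  Triangle a b c ∧ Odd (a + b + c) ∧ a + b + c < 2 * p

namespace AdmissibleStep

variable {p a b c : ℕ}

theorem eq_one_of_pred (h : AdmissibleStep p (p - 1) (p - 1) c) : c = 1 := by
  obtain ⟨-, ⟨t, ht⟩, hlt⟩ := h
  omega

theorem eq_pred_of_one (h : AdmissibleStep p 1 (p - 1) c) : c = p - 1 := by
  obtain ⟨⟨-, htri, -⟩, ⟨t, ht⟩, hlt⟩ := h
  omega

theorem add_le_of_pred (h : AdmissibleStep p (p - 1) b c) : b + c ≤ p := by
  obtain ⟨-, -, hlt⟩ := h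
  omega

theorem chain_odd_eq_pred {n : ℕ} {e' : ℕ → ℕ} (h1 : e' 1 = p - 1)
    (hstep : ∀ m, 1 ≤ m → m < n → AdmissibleStep p (e' m) (p - 1) (e' (m + 1))) :
    ∀ k, 2 * k + 1 ≤ n → e' (2 * k + 1) = p - 1 := by
  intro k
  induction k with
  | zero => exact fun _ => h1
  | succ k ih =>
    intro hk
    have hpred := ih (by omega)
    have hone : e' (2 * k + 2) = 1 :=
      (hpred ▸ hstep (2 * k + 1) (by omega) (by omega)).eq_one_of_pred
    exact (hone ▸ hstep (2 * k + 2) (by omega) (by omega)).eq_pred_of_one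

end AdmissibleStep

theorem example_tuple_not_admissible_odd_general (p : ℕ)
    (r : ℕ) (hr : 3 ≤ r) (hrodd : Odd r) (e : ℕ → ℕ)
    (he : ∀ i, 1 ≤ i → i ≤ r - 2 → e i = p - 1)
    (hgt : p < e (r - 1) + e r) :
    ¬ NumericallyPAdmissible p r e := by
  rintro ⟨e', h1, hlast, -, hcon⟩
  have hstep : ∀ m, 1 ≤ m → m < r - 2 → AdmissibleStep p (e' m) (p - 1) (e' (m + 1)) := by
    intro m hm hmr
    simpa only [AdmissibleStep, he (m + 1) (by omega) (by omega)] using hcon m hm (by omega)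
  obtain ⟨k, hk⟩ : ∃ k, r - 2 = 2 * k + 1 := by
    obtain ⟨j, rfl⟩ := hrodd
    exact ⟨j - 1, by omega⟩
  have hpred : e' (r - 2) = p - 1 :=
    hk ▸ AdmissibleStep.chain_odd_eq_pred (h1.trans (he 1 le_rfl (by omega))) hstep k hk.ge
  have hfinal : AdmissibleStep p (e' (r - 2)) (e (r - 1)) (e r) := by
    simpa only [AdmissibleStep, show r - 2 + 1 = r - 1 by omega, hlast] using hcon (r - 2) (by omega) (by omega)
  have := (hpred ▸ hfinal).add_le_of_pred
  omega

/-- Example 4.3 (odd `r`): for `p` an odd prime and odd `r ≥ 3`, the tuple with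
`eᵢ = p − 1` for `i ≤ r − 2` and `e_{r−1} + e_r > p` odd is not numerically
`p`-admissible. -/
theorem example_tuple_not_admissible_odd (p : ℕ) (hp : p.Prime) (hodd : Odd p)
    (r : ℕ) (hr : 3 ≤ r) (hrodd : Odd r) (e : ℕ → ℕ)
    (he : ∀ i, 1 ≤ i → i ≤ r - 2 → e i = p - 1)
    (he1 : 0 < e (r - 1)) (he1p : e (r - 1) < p)
    (he2 : 0 < e r) (he2p : e r < p)
    (hgt : p < e (r - 1) + e r) (hsumodd : Odd (e (r - 1) + e r)) :
    ¬ NumericallyPAdmissible p r e :=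
  example_tuple_not_admissible_odd_general p r hr hrodd e he hgt
end

section
/- Let p be an odd prime and let r ≥ 4 be even. Define eᵢ = p−1 for 1 ≤ i ≤ r−2, and let e_{r−1}, e_r be positive integers less than p with e_{r−1} ≠ e_r and e_{r−1} + e_r even. Then the tuple (e₁,…,e_r) is not numerically p-admissible. -/
theorem Triangle.add_eq_succ_of_even {a b c : ℕ} (hc : Even c) (ht : Triangle a c b)
    (hodd : Odd (a + c + b)) (hlt : a + c + b < 2 * (c + 1)) : a + b = c + 1 := by
  obtain ⟨k, rfl⟩ := hc
  obtain ⟨l, hl⟩ := hodd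
  obtain ⟨-, hcab, -⟩ := ht
  omega

theorem Triangle.eq_of_one_of_even_add {a b : ℕ} (ht : Triangle 1 a b) (hab : Even (a + b)) :
    a = b := by
  obtain ⟨k, hk⟩ := hab
  obtain ⟨-, h₁, h₂⟩ := ht
  omega

theorem add_eq_of_consecutive_add_eq {f : ℕ → ℕ} {s n : ℕ}
    (h : ∀ m, 1 ≤ m → m < n → f m + f (m + 1) = s) :
    ∀ k, 2 * k + 2 ≤ n → f 1 + f (2 * k + 2) = s
  | 0, _ => h 1 le_rfl (by omega)
  | k + 1, hk => by
    rw [show 2 * (k + 1) + 2 = 2 * k + 3 + 1 by omega]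
    have ih := add_eq_of_consecutive_add_eq h k (by omega)
    have h₁ : f (2 * k + 2) + f (2 * k + 3) = s := h (2 * k + 2) (by omega) (by omega)
    have h₂ := h (2 * k + 3) (by omega) (by omega)
    omega

theorem example_tuple_not_admissible_even_general (p : ℕ) (hodd : Odd p)
    (r : ℕ) (hr : 4 ≤ r) (hreven : Even r) (e : ℕ → ℕ)
    (he : ∀ i, 1 ≤ i → i ≤ r - 2 → e i = p - 1)
    (hne : e (r - 1) ≠ e r) (hsumeven : Even (e (r - 1) + e r)) :
    ¬ NumericallyPAdmissible p r e := by
  rintro ⟨e', h₁, hr₁, -, hcons⟩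
  have hp_pos : 1 ≤ p := hodd.pos
  have hstep : ∀ m, 1 ≤ m → m < r - 2 → e' m + e' (m + 1) = p := by
    intro m hm hmr
    obtain ⟨ht, hsum, hlt⟩ := hcons m hm (by omega)
    rw [he (m + 1) (by omega) (by omega)] at ht hsum hlt
    have := ht.add_eq_succ_of_even (Nat.Odd.sub_odd hodd odd_one) hsum (by omega)
    omega
  obtain ⟨k, rfl⟩ : ∃ k, r = 2 * k + 4 := by
    obtain ⟨j, hj⟩ := hreven
    exact ⟨j - 2, by omega⟩
  have hlast : e' (2 * k + 2) = 1 := by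
    have := add_eq_of_consecutive_add_eq hstep k (by omega)
    rw [h₁, he 1 le_rfl (by omega)] at this
    omega
  obtain ⟨ht, -⟩ := hcons (2 * k + 2) (by omega) (by omega)
  rw [hlast, show 2 * k + 2 + 1 = 2 * k + 4 - 1 by omega, hr₁] at ht
  exact hne (ht.eq_of_one_of_even_add hsumeven)

/-- Example 4.3 (even `r`): for `p` an odd prime and even `r ≥ 4`, the tuple with
`eᵢ = p − 1` for `i ≤ r − 2` and `e_{r−1} ≠ e_r`, `e_{r−1} + e_r` even, is not numerically
`p`-admissible. -/
theorem example_tuple_not_admissible_even (p : ℕ) (hp : p.Prime) (hodd : Odd p)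
    (r : ℕ) (hr : 4 ≤ r) (hreven : Even r) (e : ℕ → ℕ)
    (he : ∀ i, 1 ≤ i → i ≤ r - 2 → e i = p - 1)
    (he1 : 0 < e (r - 1)) (he1p : e (r - 1) < p)
    (he2 : 0 < e r) (he2p : e r < p)
    (hne : e (r - 1) ≠ e r) (hsumeven : Even (e (r - 1) + e r)) :
    ¬ NumericallyPAdmissible p r e :=
  example_tuple_not_admissible_even_general p hodd r hr hreven e he hne hsumeven
end

section
/- Let p > 3 be a prime and let e₁, e₂, e₃ be positive integers, each prime to p, satisfying the triangle inequality, with e₁+e₂+e₃ odd, e₁ < p, and p < e₂ < 2p, p < e₃ < 2p. Let d be the integer with 2d−2 = (e₁−1)+(e₂−1)+(e₃−1). Then (e₁,e₂,e₃) is numerically p-admissible if and only if d < 2p and e₂ + e₃ − e₁ ≥ 2p. -/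
/-! Since `2d + 1 < 5p` and `p > 3`, we have `d < p²`, so only the level `m = 1` matters. There `S`
cannot contain the small index, and the floor/ceiling sum is `1 + Σ_{i ∈ {2,3}} (i ∈ S ? 1 : 2)`,
which is odd exactly for `S = ∅` and `S = {2,3}`. These two subsets give the inequalities
`5p − (2d + 1) ≥ p` and `e₂ + e₃ − e₁ − p ≥ p`. -/

lemma eDown_eq_sub_of_le_of_lt {q e k : ℕ} (hlo : k * q ≤ e) (hhi : e < (k + 1) * q) :
    eDown q e = e - k * q := by
  rw [eDown, Nat.div_eq_of_lt_le hlo hhi, mul_comm]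

lemma add_sub_one_div_eq_of_lt_of_le {q e k : ℕ} (hlo : k * q < e) (hhi : e ≤ (k + 1) * q) :
    (e + q - 1) / q = k + 1 := by
  have hq : 0 < q := Nat.pos_of_ne_zero (by rintro rfl; simp at hhi; omega)
  rw [show e + q - 1 = e - 1 + q by omega, Nat.add_div_right _ hq,
    Nat.div_eq_of_lt_le (k := k) (by omega) (by omega)]

lemma eUp_eq_sub_of_lt_of_le {q e k : ℕ} (hlo : k * q < e) (hhi : e ≤ (k + 1) * q) :
    eUp q e = (k + 1) * q - e := by
  rw [eUp, add_sub_one_div_eq_of_lt_of_le hlo hhi, mul_comm]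

lemma sum_add_sum_compl_fin_three {M : Type*} [AddCommMonoid M] (S : Finset (Fin 3))
    (f g : Fin 3 → M) :
    ∑ i ∈ S, f i + ∑ i ∈ Sᶜ, g i =
      (if 0 ∈ S then f 0 else g 0) + (if 1 ∈ S then f 1 else g 1) +
        (if 2 ∈ S then f 2 else g 2) := by
  have h := Finset.sum_piecewise Finset.univ S f g
  rw [Finset.univ_inter, ← Finset.compl_eq_univ_sdiff] at h
  rw [← h]
  simp [Fin.sum_univ_three, Finset.piecewise]

def AdmissibleAt (p d : ℕ) (e : Fin 3 → ℕ) (m : ℕ) (S : Finset (Fin 3)) : Prop :=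
  p ^ m ≤ d → (∀ i ∈ S, p ^ m < e i) →
    Odd ((∑ i ∈ S, e i / p ^ m) + ∑ i ∈ Sᶜ, (e i + p ^ m - 1) / p ^ m) →
    p ^ m ≤ (∑ i ∈ S, eDown (p ^ m) (e i)) + ∑ i ∈ Sᶜ, eUp (p ^ m) (e i)

theorem numericallyPAdmissible3_iff_of_lt_sq {p d : ℕ} {e : Fin 3 → ℕ} (hd : d < p ^ 2) :
    NumericallyPAdmissible3 p d e ↔ ∀ S, AdmissibleAt p d e 1 S := by
  refine ⟨fun h => h 1 le_rfl, fun h m hm S hpm => ?_⟩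
  obtain rfl | hm2 := hm.eq_or_lt
  · exact h S hpm
  · have hp : 0 < p := Nat.pos_of_ne_zero (by rintro rfl; simp at hd)
    have : p ^ 2 ≤ p ^ m := Nat.pow_le_pow_right hp hm2
    omega

theorem forall_admissibleAt_one_iff {p d : ℕ} {e : Fin 3 → ℕ} (he0 : 0 < e 0) (h1 : e 0 < p)
    (h2l : p < e 1) (h2u : e 1 < 2 * p) (h3l : p < e 2) (h3u : e 2 < 2 * p) (hpd : p ≤ d) :
    (∀ S, AdmissibleAt p d e 1 S) ↔
      p ≤ (p - e 0) + (2 * p - e 1) + (2 * p - e 2) ∧ p ≤ (p - e 0) + (e 1 - p) + (e 2 - p) := by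
  have q0 : e 0 / p = 0 := Nat.div_eq_of_lt h1
  have q1 : e 1 / p = 1 := Nat.div_eq_of_lt_le (by omega) (by omega)
  have q2 : e 2 / p = 1 := Nat.div_eq_of_lt_le (by omega) (by omega)
  have c0 : (e 0 + p - 1) / p = 1 := add_sub_one_div_eq_of_lt_of_le (k := 0) (by omega) (by omega)
  have c1 : (e 1 + p - 1) / p = 2 := add_sub_one_div_eq_of_lt_of_le (k := 1) (by omega) (by omega)
  have c2 : (e 2 + p - 1) / p = 2 := add_sub_one_div_eq_of_lt_of_le (k := 1) (by omega) (by omega)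
  have d1 : eDown p (e 1) = e 1 - p := by
    simpa using eDown_eq_sub_of_le_of_lt (k := 1) (by omega) (by omega)
  have d2 : eDown p (e 2) = e 2 - p := by
    simpa using eDown_eq_sub_of_le_of_lt (k := 1) (by omega) (by omega)
  have u0 : eUp p (e 0) = p - e 0 := by
    simpa using eUp_eq_sub_of_lt_of_le (k := 0) (by omega) (by omega)
  have u1 : eUp p (e 1) = 2 * p - e 1 := eUp_eq_sub_of_lt_of_le (k := 1) (by omega) (by omega)
  have u2 : eUp p (e 2) = 2 * p - e 2 := eUp_eq_sub_of_lt_of_le (k := 1) (by omega) (by omega)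
  simp only [AdmissibleAt, pow_one, sum_add_sum_compl_fin_three, q0, q1, q2, c0, c1, c2, d1, d2,
    u0, u1, u2]
  constructor
  · intro h
    exact ⟨by simpa using h ∅ hpd (by simp) (by decide),
      by simpa using h {1, 2} hpd (by simp [h2l, h3l]) (by simp; decide)⟩
  · rintro ⟨hempty, hfull⟩ S _ hS hodd
    have h0S : 0 ∉ S := fun h => (hS 0 h).not_gt h1
    by_cases h1S : 1 ∈ S <;> by_cases h2S : 2 ∈ S <;>
      simp only [h0S, h1S, h2S, if_true, if_false] at hodd ⊢
    -- `S = {1}` and `S = {2}` fail the parity condition.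
    all_goals first | omega | exact absurd hodd (by decide)

theorem admissibility_one_small_two_medium_general (p : ℕ) (hp3 : 3 < p)
    (d : ℕ) (e : Fin 3 → ℕ)
    (he : ∀ i, 0 < e i)
    (h1 : e 0 < p)
    (h2l : p < e 1) (h2u : e 1 < 2 * p)
    (h3l : p < e 2) (h3u : e 2 < 2 * p)
    (hsum : 2 * d + 1 = e 0 + e 1 + e 2) :
    NumericallyPAdmissible3 p d e ↔ (d < 2 * p ∧ 2 * p + e 0 ≤ e 1 + e 2) := by
  have hd : d < p ^ 2 := by nlinarith
  rw [numericallyPAdmissible3_iff_of_lt_sq hd,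
    forall_admissibleAt_one_iff (he 0) h1 h2l h2u h3l h3u (by omega)]
  omega

/-- Example 2.6, first case: for `p > 3`, `e₁ < p` and `p < e₂, e₃ < 2p`, the triple
`(e₁, e₂, e₃)` is numerically `p`-admissible if and only if `d < 2p` and
`e₂ + e₃ − e₁ ≥ 2p`. -/
theorem admissibility_one_small_two_medium (p : ℕ) (hp : p.Prime) (hp3 : 3 < p)
    (d : ℕ) (e : Fin 3 → ℕ)
    (he : ∀ i, 0 < e i) (hep : ∀ i, ¬ p ∣ e i)
    (htri : e 0 ≤ e 1 + e 2 ∧ e 1 ≤ e 0 + e 2 ∧ e 2 ≤ e 0 + e 1)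
    (hodd : Odd (e 0 + e 1 + e 2))
    (h1 : e 0 < p)
    (h2l : p < e 1) (h2u : e 1 < 2 * p)
    (h3l : p < e 2) (h3u : e 2 < 2 * p)
    (hsum : 2 * d + 1 = e 0 + e 1 + e 2) :
    NumericallyPAdmissible3 p d e ↔ (d < 2 * p ∧ 2 * p + e 0 ≤ e 1 + e 2) :=
  admissibility_one_small_two_medium_general p hp3 d e he h1 h2l h2u h3l h3u hsum
end

section
/- Let p > 3 be a prime and let e₁, e₂, e₃ be positive integers, each prime to p, satisfying the triangle inequality, with e₁+e₂+e₃ odd and p < eᵢ < 2p for all i. Let d be the integer with 2d−2 = (e₁−1)+(e₂−1)+(e₃−1). Then (e₁,e₂,e₃) is numerically p-admissible if and only if d ≥ 2p and eᵢ + eⱼ − eₖ ≤ 2p for every permutation {i,j,k} of {1,2,3}. -/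
lemma sum_split3 (S : Finset (Fin 3)) (f g : Fin 3 → ℕ) :
    (∑ i ∈ S, f i) + ∑ i ∈ Sᶜ, g i = ∑ i : Fin 3, (if i ∈ S then f i else g i) := by
  classical
  have h : ∀ i : Fin 3, (if i ∈ S then f i else g i)
      = (if i ∈ S then f i else 0) + (if i ∈ Sᶜ then g i else 0) := by
    intro i
    by_cases h : i ∈ S <;> simp [h]
  simp only [h, Finset.sum_add_distrib, Finset.sum_ite_mem, Finset.univ_inter]

/-- Example 2.6, second case: for `p > 3` and `p < eᵢ < 2p` for all `i`, the triple
`(e₁, e₂, e₃)` is numerically `p`-admissible if and only if `d ≥ 2p` and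
`eᵢ + eⱼ − eₖ ≤ 2p` for every permutation `{i, j, k}` of `{1, 2, 3}`. -/
theorem admissibility_three_medium (p : ℕ) (hp : p.Prime) (hp3 : 3 < p)
    (d : ℕ) (e : Fin 3 → ℕ)
    (he : ∀ i, 0 < e i) (hep : ∀ i, ¬ p ∣ e i)
    (htri : e 0 ≤ e 1 + e 2 ∧ e 1 ≤ e 0 + e 2 ∧ e 2 ≤ e 0 + e 1)
    (hodd : Odd (e 0 + e 1 + e 2))
    (hl : ∀ i, p < e i) (hu : ∀ i, e i < 2 * p)
    (hsum : 2 * d + 1 = e 0 + e 1 + e 2) :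
    NumericallyPAdmissible3 p d e ↔
      (2 * p ≤ d ∧ ∀ i j l : Fin 3, i ≠ j → i ≠ l → j ≠ l →
        e i + e j ≤ 2 * p + e l) := by
  have h5 : 5 ≤ p := by
    by_contra h
    interval_cases p
    · exact absurd hp (by decide)
  have hpd : p ≤ d := by have := hl 0; have := hl 1; have := hl 2; omega
  have hd3 : d ≤ 3 * p := by have := hu 0; have := hu 1; have := hu 2; omega
  have hdiv : ∀ i, e i / p = 1 := by
    intro i
    exact Nat.div_eq_of_lt_le (by have := hl i; omega) (by have := hu i; omega)
  have hceil : ∀ i, (e i + p - 1) / p = 2 := by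
    intro i
    exact Nat.div_eq_of_lt_le (by have := hl i; omega) (by have := hu i; omega)
  have hdown : ∀ i, eDown p (e i) = e i - p := by
    intro i; unfold eDown; rw [hdiv i]; omega
  have hup : ∀ i, eUp p (e i) = 2 * p - e i := by
    intro i; unfold eUp; rw [hceil i]; omega
  have h0 := hl 0; have h1 := hl 1; have h2 := hl 2
  have u0 := hu 0; have u1 := hu 1; have u2 := hu 2
  constructor
  · intro H
    have key : ∀ S : Finset (Fin 3),
        Odd ((∑ i ∈ S, e i / p) + ∑ i ∈ Sᶜ, (e i + p - 1) / p) →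
        p ≤ (∑ i ∈ S, eDown p (e i)) + ∑ i ∈ Sᶜ, eUp p (e i) := by
      intro S hS
      have := H 1 le_rfl S (by simpa using hpd)
        (fun i _ => by simpa using hl i) (by simpa using hS)
      simpa using this
    have cu : (Finset.univ : Finset (Fin 3))ᶜ = ∅ := by simp
    have c0 : ({0} : Finset (Fin 3))ᶜ = {1, 2} := by decide
    have c1 : ({1} : Finset (Fin 3))ᶜ = {0, 2} := by decide
    have c2 : ({2} : Finset (Fin 3))ᶜ = {0, 1} := by decide
    have kU : p ≤ (e 0 - p) + (e 1 - p) + (e 2 - p) := by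
      have := key Finset.univ ?_
      · rwa [cu, Finset.sum_empty, Fin.sum_univ_three, hdown, hdown, hdown,
          Nat.add_zero] at this
      · rw [cu, Finset.sum_empty, Fin.sum_univ_three, hdiv, hdiv, hdiv, Nat.add_zero]
        decide
    have k0 : p ≤ (e 0 - p) + ((2 * p - e 1) + (2 * p - e 2)) := by
      have := key {0} ?_
      · rwa [c0, Finset.sum_singleton, Finset.sum_insert (by decide),
          Finset.sum_singleton, hdown, hup, hup] at this
      · rw [c0, Finset.sum_singleton, Finset.sum_insert (by decide),
          Finset.sum_singleton, hdiv, hceil, hceil]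
        decide
    have k1 : p ≤ (e 1 - p) + ((2 * p - e 0) + (2 * p - e 2)) := by
      have := key {1} ?_
      · rwa [c1, Finset.sum_singleton, Finset.sum_insert (by decide),
          Finset.sum_singleton, hdown, hup, hup] at this
      · rw [c1, Finset.sum_singleton, Finset.sum_insert (by decide),
          Finset.sum_singleton, hdiv, hceil, hceil]
        decide
    have k2 : p ≤ (e 2 - p) + ((2 * p - e 0) + (2 * p - e 1)) := by
      have := key {2} ?_
      · rwa [c2, Finset.sum_singleton, Finset.sum_insert (by decide),
          Finset.sum_singleton, hdown, hup, hup] at this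
      · rw [c2, Finset.sum_singleton, Finset.sum_insert (by decide),
          Finset.sum_singleton, hdiv, hceil, hceil]
        decide
    refine ⟨by omega, ?_⟩
    intro i j l hij hil hjl
    have hset : ({i, j, l} : Finset (Fin 3)) = Finset.univ := by
      apply Finset.eq_univ_of_card
      rw [Finset.card_insert_of_notMem (by simp [hij, hil]),
        Finset.card_insert_of_notMem (by simp [hjl]), Finset.card_singleton]
      simp
    have hsum3 : e i + e j + e l = e 0 + e 1 + e 2 := by
      have h := congrArg (fun s => ∑ x ∈ s, e x) hset
      rw [Finset.sum_insert (by simp [hij, hil]), Finset.sum_insert (by simp [hjl]),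
        Finset.sum_singleton, Fin.sum_univ_three] at h
      omega
    have hell : e l = e 0 ∨ e l = e 1 ∨ e l = e 2 := by
      fin_cases l <;> simp
    omega
  · rintro ⟨hd2, hperm⟩
    intro m hm S hpmd hSe hoddS
    have hm1 : m = 1 := by
      by_contra hne
      have h2m : 2 ≤ m := by omega
      have hle : p ^ 2 ≤ p ^ m := Nat.pow_le_pow_right (by omega) h2m
      have hsq : 5 * p ≤ p ^ 2 := by
        have : 5 * p ≤ p * p := Nat.mul_le_mul_right p h5
        simpa [pow_two] using this
      omega
    subst hm1
    rw [pow_one] at hoddS ⊢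
    have h01 := hperm 0 1 2 (by decide) (by decide) (by decide)
    have h02 := hperm 0 2 1 (by decide) (by decide) (by decide)
    have h12 := hperm 1 2 0 (by decide) (by decide) (by decide)
    rw [sum_split3] at hoddS ⊢
    simp only [Fin.sum_univ_three] at hoddS ⊢
    rw [Nat.odd_iff] at hoddS
    by_cases m0 : (0:Fin 3) ∈ S <;> by_cases m1 : (1:Fin 3) ∈ S <;>
      by_cases m2 : (2:Fin 3) ∈ S <;>
      simp only [m0, m1, m2, if_true, if_false, hdiv, hceil, hdown, hup] at hoddS ⊢ <;>
      omega
end
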